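/- Let F : ℝ → ℝ be continuous and let h : ℝ → (0,∞) be C¹ with h'(x) ≤ -2sκ h(x) for all x ≥ α (i.e., h = e^{-2sφ} with ∂_x φ ≥ κ > 0). Suppose all integrals below are finite. Then ∫_α^∞ |∫_α^{x} F(ξ)dξ|² h(x) dx ≤ (1/(sκ)²)·C ∫_α^∞ |F(x)|² h(x) dx for some absolute constant C (one may take C = 1). -/

import Mathlib

open MeasureTheory

/-- one-dimensional core of the weighted inequality with 1/s² gain. -/
theorem stmt_6 (α s κ : ℝ) (hs : 0 < s) (hκ : 0 < κ)
    (F h : ℝ → ℝ) (hF : Continuous F)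
    (hh_pos : ∀ x, 0 < h x) (hh_diff : ContDiff ℝ 1 h)
    (hh' : ∀ x, α ≤ x → deriv h x ≤ -2 * s * κ * h x)
    (hInt₁ : IntegrableOn (fun x => (F x)^2 * h x) (Set.Ici α))
    (hInt₂ : IntegrableOn (fun x => (∫ ξ in α..x, F ξ)^2 * h x) (Set.Ici α)) :
    (∫ x in Set.Ici α, (∫ ξ in α..x, F ξ)^2 * h x) ≤
      (1 / (s * κ))^2 * ∫ x in Set.Ici α, (F x)^2 * h x := by
  have hsκ : 0 < s * κ := mul_pos hs hκ
  set G : ℝ → ℝ := fun x => ∫ ξ in α..x, F ξ with hGdef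
  have hGderiv : ∀ x, HasDerivAt G (F x) x := fun x =>
    intervalIntegral.integral_hasDerivAt_right (hF.intervalIntegrable _ _)
      (hF.stronglyMeasurableAtFilter _ _) hF.continuousAt
  have hGcont : Continuous G :=
    continuous_iff_continuousAt.2 fun x => (hGderiv x).continuousAt
  have hhcont : Continuous h := hh_diff.continuous
  have hh'cont : Continuous (deriv h) := hh_diff.continuous_deriv le_rfl
  set B := ∫ x in Set.Ici α, (F x)^2 * h x with hBdef
  have hBnn : 0 ≤ B :=
    setIntegral_nonneg measurableSet_Ici fun x _ =>
      mul_nonneg (sq_nonneg _) (hh_pos x).le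
  have hRHSnn : 0 ≤ (1 / (s * κ))^2 * B := mul_nonneg (sq_nonneg _) hBnn
  have hkey : ∀ R : ℝ, (∫ x in α..R, (G x)^2 * h x) ≤ (1 / (s * κ))^2 * B := by
    intro R
    rcases le_or_gt R α with hR | hR
    · have h1 : (∫ x in α..R, (G x)^2 * h x) = - ∫ x in R..α, (G x)^2 * h x :=
        (intervalIntegral.integral_symm _ _)
      have h2 : 0 ≤ ∫ x in R..α, (G x)^2 * h x :=
        intervalIntegral.integral_nonneg hR fun x _ =>
          mul_nonneg (sq_nonneg _) (hh_pos x).le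
      rw [h1]
      linarith
    · have hR' : α ≤ R := hR.le
      -- FTC for (G^2 h)' on [α, R]
      have hfderiv : ∀ x ∈ Set.uIcc α R, HasDerivAt (fun x => (G x)^2 * h x)
          (2 * G x * F x * h x + (G x)^2 * deriv h x) x := by
        intro x _
        have hx1 : HasDerivAt (fun x => (G x)^2) (2 * G x * F x) x := by
          have := (hGderiv x).fun_pow 2
          simpa [mul_comm, mul_assoc, mul_left_comm] using this
        have hx2 : HasDerivAt h (deriv h x) x :=
          ((hh_diff.differentiable one_ne_zero) x).hasDerivAt
        have := hx1.fun_mul hx2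
        convert this using 1
      have hcont1 : Continuous fun x => 2 * G x * F x * h x :=
        ((continuous_const.mul hGcont).mul hF).mul hhcont
      have hcont2 : Continuous fun x => (G x)^2 * deriv h x :=
        (hGcont.pow 2).mul hh'cont
      have hcont3 : Continuous fun x => (G x)^2 * h x := (hGcont.pow 2).mul hhcont
      have hcont4 : Continuous fun x => (F x)^2 * h x := (hF.pow 2).mul hhcont
      have hFTC : (∫ x in α..R, (2 * G x * F x * h x + (G x)^2 * deriv h x))
          = (G R)^2 * h R - (G α)^2 * h α :=
        intervalIntegral.integral_eq_sub_of_hasDerivAt hfderiv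
          ((hcont1.add hcont2).intervalIntegrable _ _)
      have hGα : G α = 0 := intervalIntegral.integral_same
      have hsplit : (∫ x in α..R, (2 * G x * F x * h x + (G x)^2 * deriv h x))
          = (∫ x in α..R, 2 * G x * F x * h x) + ∫ x in α..R, (G x)^2 * deriv h x :=
        intervalIntegral.integral_add (hcont1.intervalIntegrable _ _)
          (hcont2.intervalIntegrable _ _)
      set I := ∫ x in α..R, (G x)^2 * h x with hIdef
      set J := ∫ x in α..R, (F x)^2 * h x with hJdef
      set K := ∫ x in α..R, (G x)^2 * deriv h x with hKdef
      set L := ∫ x in α..R, 2 * G x * F x * h x with hLdef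
      have hLK : 0 ≤ L + K := by
        rw [hLdef, hKdef, ← hsplit, hFTC, hGα]
        have := mul_nonneg (sq_nonneg (G R)) (hh_pos R).le
        nlinarith
      -- 2sκ I ≤ -K
      have h2I : 2 * s * κ * I ≤ -K := by
        have : (∫ x in α..R, (G x)^2 * deriv h x) ≤
            ∫ x in α..R, (G x)^2 * (-2 * s * κ * h x) := by
          apply intervalIntegral.integral_mono_on hR'
            (hcont2.intervalIntegrable _ _)
            (((hGcont.pow 2).mul ((continuous_const.mul hhcont))).intervalIntegrable _ _)
          intro x hx
          exact mul_le_mul_of_nonneg_left (hh' x hx.1) (sq_nonneg _)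
        have heq : (∫ x in α..R, (G x)^2 * (-2 * s * κ * h x))
            = (-2 * s * κ) * I := by
          rw [hIdef, ← intervalIntegral.integral_const_mul]
          congr 1; ext x; ring
        rw [heq] at this
        rw [← hKdef] at this
        linarith
      -- L ≤ sκ I + (1/(sκ)) J
      have hL : L ≤ s * κ * I + (1 / (s * κ)) * J := by
        have hpt : ∀ x ∈ Set.Icc α R, 2 * G x * F x * h x ≤
            (s * κ * (G x)^2 + (1 / (s * κ)) * (F x)^2) * h x := by
          intro x _
          apply mul_le_mul_of_nonneg_right _ (hh_pos x).le
          have h1 : 0 ≤ (s * κ * G x - F x)^2 / (s * κ) :=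
            div_nonneg (sq_nonneg _) hsκ.le
          have h2 : (s * κ * G x - F x)^2 / (s * κ)
              = s * κ * (G x)^2 - 2 * G x * F x + (1 / (s * κ)) * (F x)^2 := by
            field_simp
            ring
          linarith [h2 ▸ h1]
        have hmono : L ≤ ∫ x in α..R,
            (s * κ * (G x)^2 + (1 / (s * κ)) * (F x)^2) * h x :=
          intervalIntegral.integral_mono_on hR' (hcont1.intervalIntegrable _ _)
            ((((continuous_const.mul (hGcont.pow 2)).add
              (continuous_const.mul (hF.pow 2))).mul hhcont).intervalIntegrable _ _)
            hpt
        have heq : (∫ x in α..R, (s * κ * (G x)^2 + (1 / (s * κ)) * (F x)^2) * h x)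
            = s * κ * I + (1 / (s * κ)) * J := by
          rw [hIdef, hJdef, ← intervalIntegral.integral_const_mul,
            ← intervalIntegral.integral_const_mul,
            ← intervalIntegral.integral_add (f := fun x => s * κ * ((G x)^2 * h x))
              (g := fun x => (1 / (s * κ)) * ((F x)^2 * h x))
              ((continuous_const.mul hcont3 : Continuous fun x => s * κ * ((G x)^2 * h x)).intervalIntegrable _ _)
              ((continuous_const.mul hcont4 : Continuous fun x => (1 / (s * κ)) * ((F x)^2 * h x)).intervalIntegrable _ _)]
          congr 1; ext x; ring
        rw [heq] at hmono
        exact hmono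
      -- combine: I ≤ (1/(sκ))^2 J
      have hIJ : I ≤ (1 / (s * κ))^2 * J := by
        have h2 : 2 * s * κ * I ≤ s * κ * I + (1 / (s * κ)) * J := by linarith
        have h3 : s * κ * I ≤ (1 / (s * κ)) * J := by linarith
        have h5 : s * κ * I ≤ s * κ * ((1 / (s * κ))^2 * J) := by
          have he : s * κ * ((1 / (s * κ))^2 * J) = (1 / (s * κ)) * J := by
            field_simp
          rw [he]; exact h3
        exact le_of_mul_le_mul_left h5 hsκ
      -- J ≤ B
      have hJB : J ≤ B := by
        rw [hJdef, intervalIntegral.integral_of_le hR', hBdef]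
        apply setIntegral_mono_set hInt₁
        · exact Filter.Eventually.of_forall fun x =>
            mul_nonneg (sq_nonneg _) (hh_pos x).le
        · exact HasSubset.Subset.eventuallyLE (fun x hx => hx.1.le)
      calc I ≤ (1 / (s * κ))^2 * J := hIJ
        _ ≤ (1 / (s * κ))^2 * B := by
            exact mul_le_mul_of_nonneg_left hJB (sq_nonneg _)
  have hInt₂' : IntegrableOn (fun x => (G x)^2 * h x) (Set.Ioi α) :=
    hInt₂.mono_set Set.Ioi_subset_Ici_self
  have htend : Filter.Tendsto (fun R => ∫ x in α..R, (G x)^2 * h x)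
      Filter.atTop (nhds (∫ x in Set.Ioi α, (G x)^2 * h x)) :=
    MeasureTheory.intervalIntegral_tendsto_integral_Ioi α hInt₂' Filter.tendsto_id
  rw [show (∫ x in Set.Ici α, (G x)^2 * h x) = ∫ x in Set.Ioi α, (G x)^2 * h x from
    MeasureTheory.integral_Ici_eq_integral_Ioi]
  exact le_of_tendsto htend (Filter.Eventually.of_forall hkey)
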